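/- Let a ∈ (0,2) with a ≠ 1 and λ, μ > 0. Then ∫_0^∞ ((μ-λ)·x·e^{-λx} - e^{-λx} + e^{-μx})·x^{-1-a} dx = Γ(-a)·((a-1)·λ^a - a·μ·λ^{a-1} + μ^a), where Γ denotes the real Gamma function and powers are real powers. (The integrand is the Kullback–Leibler integrand (u·log u - u + 1)·e^{-μx}·x^{-1-a} with u = e^{-(λ-μ)x}; it vanishes to second order at x = 0, so the integral converges.) -/

import Mathlib

/-!
The integrand is the Bregman remainder `g μ - g λ - g' λ * (μ - λ)` of `g c = exp (-(c * x))`,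
multiplied by `x ^ (s - 1)` with `s = -a`. Since the Mellin transform of `exp (-(c * x))` is
`Γ(s) * c ^ (-s)`, the Mellin transform of the remainder is `Γ(s)` times the same remainder of
`c ↦ c ^ (-s)`. For `s > 0` this is linearity; it persists for `-2 < s < 0`, `s ≠ -1`, because
the remainder is `O(x²)` at `0` (and a plain difference `exp (-(λ * x)) - exp (-(μ * x))` is
`O(x)`), and each step down in `s` is one integration by parts against `x ^ (s - 1)`, closed up
by `Γ(s + 1) = s * Γ(s)`.
-/

open Real Filter Topology MeasureTheory Set

def IsBoundedByRpowExp (f : ℝ → ℝ) (C p r : ℝ) : Prop :=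
  ∀ x ∈ Ioi (0 : ℝ), |f x| ≤ C * (x ^ p * exp (-(r * x)))

lemma integrableOn_rpow_mul_exp_neg_mul_Ioi {s c : ℝ} (hs : -1 < s) (hc : 0 < c) :
    IntegrableOn (fun x : ℝ => x ^ s * exp (-(c * x))) (Ioi 0) := by
  simpa [neg_mul] using integrableOn_rpow_mul_exp_neg_mul_rpow hs zero_lt_one hc

lemma integral_rpow_mul_exp_neg_mul_Ioi_of_neg_one_lt {s c : ℝ} (hs : -1 < s) (hc : 0 < c) :
    ∫ x in Ioi 0, x ^ s * exp (-(c * x)) = Gamma (s + 1) * c ^ (-(s + 1)) := by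
  have := integral_rpow_mul_exp_neg_mul_Ioi (neg_lt_iff_pos_add.1 hs) hc
  rwa [add_sub_cancel_right, one_div, inv_rpow hc.le, ← rpow_neg hc.le, mul_comm] at this

namespace IsBoundedByRpowExp

variable {f : ℝ → ℝ} {C p r : ℝ}

lemma mul_rpow (hf : IsBoundedByRpowExp f C p r) (q : ℝ) :
    IsBoundedByRpowExp (fun x => f x * x ^ q) C (p + q) r := by
  intro x hx
  rw [abs_mul, abs_of_pos (rpow_pos_of_pos hx q), rpow_add hx]
  calc |f x| * x ^ q ≤ C * (x ^ p * exp (-(r * x))) * x ^ q :=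
      mul_le_mul_of_nonneg_right (hf x hx) (rpow_nonneg hx.le q)
    _ = C * (x ^ p * x ^ q * exp (-(r * x))) := by ring

lemma integrableOn (hf : IsBoundedByRpowExp f C p r) (hmeas : Measurable f) (hp : -1 < p)
    (hr : 0 < r) : IntegrableOn f (Ioi 0) := by
  refine Integrable.mono' ((integrableOn_rpow_mul_exp_neg_mul_Ioi hp hr).const_mul C)
    hmeas.aestronglyMeasurable ?_
  filter_upwards [ae_restrict_mem measurableSet_Ioi] with x hx using hf x hx

lemma tendsto_nhdsGT_zero (hf : IsBoundedByRpowExp f C p r) (hp : 0 < p) :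
    Tendsto f (𝓝[>] 0) (𝓝 0) := by
  have hcont : ContinuousAt (fun x : ℝ => C * (x ^ p * exp (-(r * x)))) 0 :=
    continuousAt_const.mul ((continuousAt_rpow_const 0 p (Or.inr hp.le)).mul (by fun_prop))
  refine squeeze_zero_norm' (eventually_nhdsWithin_of_forall hf) ?_
  simpa [zero_rpow hp.ne'] using hcont.tendsto.mono_left nhdsWithin_le_nhds

lemma tendsto_atTop (hf : IsBoundedByRpowExp f C p r) (hr : 0 < r) :
    Tendsto f atTop (𝓝 0) := by
  refine squeeze_zero_norm' ((eventually_gt_atTop 0).mono hf) ?_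
  simpa [neg_mul] using (tendsto_rpow_mul_exp_neg_mul_atTop_nhds_zero p r hr).const_mul C

end IsBoundedByRpowExp

theorem integral_Ioi_mul_rpow_sub_one_eq {f f' : ℝ → ℝ} {r : ℝ} (hr : r ≠ 0)
    (hf : ∀ x ∈ Ioi (0 : ℝ), HasDerivAt f (f' x) x)
    (hint : IntegrableOn (fun x => f x * x ^ (r - 1)) (Ioi 0))
    (hint' : IntegrableOn (fun x => f' x * x ^ r) (Ioi 0))
    (hzero : Tendsto (fun x => f x * x ^ r) (𝓝[>] 0) (𝓝 0))
    (htop : Tendsto (fun x => f x * x ^ r) atTop (𝓝 0)) :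
    ∫ x in Ioi 0, f x * x ^ (r - 1) = -r⁻¹ * ∫ x in Ioi 0, f' x * x ^ r := by
  have hv : ∀ x ∈ Ioi (0 : ℝ), HasDerivAt (fun y => r⁻¹ * y ^ r) (x ^ (r - 1)) x :=
    fun x hx => ((hasDerivAt_rpow_const (Or.inl (ne_of_gt hx))).const_mul r⁻¹).congr_deriv
      (by rw [← mul_assoc, inv_mul_cancel₀ hr, one_mul])
  have key := integral_Ioi_mul_deriv_eq_deriv_mul hf hv hint
    (IntegrableOn.congr_fun (hint'.const_mul r⁻¹) (fun x _ => mul_left_comm _ _ _)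
      measurableSet_Ioi)
    (by simpa only [Pi.mul_def, mul_left_comm, mul_zero] using hzero.const_mul r⁻¹)
    (by simpa only [Pi.mul_def, mul_left_comm, mul_zero] using htop.const_mul r⁻¹)
  rw [key, ← integral_const_mul]
  simp only [zero_sub, sub_zero, ← integral_neg]
  congr 1 with x
  ring

lemma hasDerivAt_exp_neg_mul (c x : ℝ) :
    HasDerivAt (fun y => exp (-(c * y))) (-c * exp (-(c * x))) x := by
  simpa [mul_comm] using ((hasDerivAt_id x).const_mul c).neg.exp

lemma abs_exp_neg_mul_sub_exp_neg_mul_le (lam mu : ℝ) {x : ℝ} (hx : 0 ≤ x) :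
    |exp (-(lam * x)) - exp (-(mu * x))| ≤ |lam - mu| * x * exp (-(min lam mu * x)) := by
  wlog hle : lam ≤ mu generalizing lam mu
  · rw [abs_sub_comm, abs_sub_comm lam, min_comm]
    exact this mu lam (le_of_not_ge hle)
  have hsplit : exp (-(mu * x)) = exp (-(lam * x)) * exp (-((mu - lam) * x)) := by
    rw [← exp_add]; ring_nf
  have hdecay : exp (-((mu - lam) * x)) ≤ 1 := exp_le_one_iff.2 (by nlinarith)
  have htangent := one_sub_le_exp_neg ((mu - lam) * x)
  rw [min_eq_left hle, abs_sub_comm lam, abs_of_nonneg (sub_nonneg.2 hle), hsplit,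
    abs_of_nonneg (by nlinarith [exp_pos (-(lam * x))])]
  nlinarith [exp_pos (-(lam * x))]

/-- `g μ - g λ - g' λ * (μ - λ)` for `g c = exp (-(c * x))`; times `x ^ (-1 - a)` it is the
Kullback–Leibler integrand of the two tempered stable Lévy measures. -/
noncomputable def expBregman (lam mu x : ℝ) : ℝ :=
  (mu - lam) * x * exp (-(lam * x)) - exp (-(lam * x)) + exp (-(mu * x))

lemma expBregman_nonneg (lam mu x : ℝ) : 0 ≤ expBregman lam mu x := by
  have hsplit : exp (-(mu * x)) = exp (-(lam * x)) * exp (-((mu - lam) * x)) := by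
    rw [← exp_add]; ring_nf
  have htangent := one_sub_le_exp_neg ((mu - lam) * x)
  rw [expBregman, hsplit]
  nlinarith [exp_pos (-(lam * x))]

lemma expBregman_le (lam mu x : ℝ) :
    expBregman lam mu x ≤ (mu - lam) * x * (exp (-(lam * x)) - exp (-(mu * x))) := by
  have hsplit : exp (-(lam * x)) = exp (-(mu * x)) * exp ((mu - lam) * x) := by
    rw [← exp_add]; ring_nf
  have htangent := add_one_le_exp ((mu - lam) * x)
  rw [expBregman, hsplit]
  nlinarith [exp_pos (-(mu * x))]

lemma isBoundedByRpowExp_exp_neg_mul_sub (lam mu : ℝ) :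
    IsBoundedByRpowExp (fun x => exp (-(lam * x)) - exp (-(mu * x))) |lam - mu| 1 (min lam mu) :=
  fun x hx => by
    simpa only [rpow_one, mul_assoc] using abs_exp_neg_mul_sub_exp_neg_mul_le lam mu hx.le

lemma isBoundedByRpowExp_expBregman (lam mu : ℝ) :
    IsBoundedByRpowExp (expBregman lam mu) ((mu - lam) ^ 2) 2 (min lam mu) := by
  intro x hx
  rw [abs_of_nonneg (expBregman_nonneg lam mu x), rpow_two]
  calc expBregman lam mu x ≤ (mu - lam) * x * (exp (-(lam * x)) - exp (-(mu * x))) :=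
        expBregman_le lam mu x
    _ ≤ |(mu - lam) * x * (exp (-(lam * x)) - exp (-(mu * x)))| := le_abs_self _
    _ = |mu - lam| * x * |exp (-(lam * x)) - exp (-(mu * x))| := by
        rw [abs_mul, abs_mul, abs_of_pos (mem_Ioi.1 hx)]
    _ ≤ |mu - lam| * x * (|lam - mu| * x * exp (-(min lam mu * x))) := by
        exact mul_le_mul_of_nonneg_left (abs_exp_neg_mul_sub_exp_neg_mul_le lam mu (le_of_lt hx))
          (mul_nonneg (abs_nonneg _) (le_of_lt hx))
    _ = (mu - lam) ^ 2 * (x ^ 2 * exp (-(min lam mu * x))) := by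
        rw [abs_sub_comm lam, ← sq_abs (mu - lam)]; ring

lemma hasDerivAt_expBregman (lam mu x : ℝ) :
    HasDerivAt (expBregman lam mu)
      (mu * (exp (-(lam * x)) - exp (-(mu * x))) - lam * (mu - lam) * x * exp (-(lam * x))) x := by
  have hlin := (hasDerivAt_id x).const_mul (mu - lam)
  refine (((hlin.mul (hasDerivAt_exp_neg_mul lam x)).sub (hasDerivAt_exp_neg_mul lam x)).add
    (hasDerivAt_exp_neg_mul mu x)).congr_deriv ?_
  simp only [id]
  ring

theorem integral_exp_neg_mul_sub_mul_rpow_sub_one {s lam mu : ℝ} (hs : -1 < s) (hs0 : s ≠ 0)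
    (hlam : 0 < lam) (hmu : 0 < mu) :
    ∫ x in Ioi 0, (exp (-(lam * x)) - exp (-(mu * x))) * x ^ (s - 1)
      = Gamma s * (lam ^ (-s) - mu ^ (-s)) := by
  have hm : 0 < min lam mu := lt_min hlam hmu
  have hv := isBoundedByRpowExp_exp_neg_mul_sub lam mu
  have hderiv (x : ℝ) (_ : x ∈ Ioi (0 : ℝ)) :
      HasDerivAt (fun y => exp (-(lam * y)) - exp (-(mu * y)))
        (mu * exp (-(mu * x)) - lam * exp (-(lam * x))) x :=
    ((hasDerivAt_exp_neg_mul lam x).sub (hasDerivAt_exp_neg_mul mu x)).congr_deriv (by ring)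
  have hkernel {c : ℝ} (hc : 0 < c) := integrableOn_rpow_mul_exp_neg_mul_Ioi hs hc
  have hsplit : EqOn (fun x => (mu * exp (-(mu * x)) - lam * exp (-(lam * x))) * x ^ s)
      (fun x => mu * (x ^ s * exp (-(mu * x))) - lam * (x ^ s * exp (-(lam * x)))) (Ioi 0) :=
    fun x _ => by ring
  rw [integral_Ioi_mul_rpow_sub_one_eq hs0 hderiv
      ((hv.mul_rpow (s - 1)).integrableOn (by fun_prop) (by linarith) hm)
      (IntegrableOn.congr_fun (((hkernel hmu).const_mul mu).sub ((hkernel hlam).const_mul lam))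
        hsplit.symm measurableSet_Ioi)
      ((hv.mul_rpow s).tendsto_nhdsGT_zero (by linarith)) ((hv.mul_rpow s).tendsto_atTop hm),
    setIntegral_congr_fun measurableSet_Ioi hsplit,
    integral_sub ((hkernel hmu).const_mul mu) ((hkernel hlam).const_mul lam),
    integral_const_mul, integral_const_mul, integral_rpow_mul_exp_neg_mul_Ioi_of_neg_one_lt hs hmu,
    integral_rpow_mul_exp_neg_mul_Ioi_of_neg_one_lt hs hlam, Gamma_add_one hs0]
  simp only [neg_add', rpow_sub_one hlam.ne', rpow_sub_one hmu.ne']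
  field_simp
  ring

theorem integral_expBregman_mul_rpow_sub_one {s lam mu : ℝ} (hs : -2 < s) (hs0 : s ≠ 0)
    (hs1 : s ≠ -1) (hlam : 0 < lam) (hmu : 0 < mu) :
    ∫ x in Ioi 0, expBregman lam mu x * x ^ (s - 1)
      = Gamma s * (mu ^ (-s) - lam ^ (-s) + s * (mu - lam) * lam ^ (-s - 1)) := by
  have hm : 0 < min lam mu := lt_min hlam hmu
  have hs1' : s + 1 ≠ 0 := fun h => hs1 (by linarith)
  have hu := isBoundedByRpowExp_expBregman lam mu
  have hv := (isBoundedByRpowExp_exp_neg_mul_sub lam mu).mul_rpow s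
  have hkernel := integrableOn_rpow_mul_exp_neg_mul_Ioi (show -1 < s + 1 by linarith) hlam
  have hsplit : EqOn
      (fun x => (mu * (exp (-(lam * x)) - exp (-(mu * x)))
        - lam * (mu - lam) * x * exp (-(lam * x))) * x ^ s)
      (fun x => mu * ((exp (-(lam * x)) - exp (-(mu * x))) * x ^ (s + 1 - 1))
        - lam * (mu - lam) * (x ^ (s + 1) * exp (-(lam * x)))) (Ioi 0) :=
    fun x hx => by simp only [add_sub_cancel_right, rpow_add_one (ne_of_gt hx)]; ring
  have hvint : IntegrableOn (fun x => (exp (-(lam * x)) - exp (-(mu * x))) * x ^ (s + 1 - 1))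
      (Ioi 0) := by
    simpa only [add_sub_cancel_right] using hv.integrableOn (by fun_prop) (by linarith) hm
  rw [integral_Ioi_mul_rpow_sub_one_eq hs0 (fun x _ => hasDerivAt_expBregman lam mu x)
      ((hu.mul_rpow (s - 1)).integrableOn (by fun_prop [expBregman]) (by linarith) hm)
      (IntegrableOn.congr_fun ((hvint.const_mul mu).sub (hkernel.const_mul _)) hsplit.symm
        measurableSet_Ioi)
      ((hu.mul_rpow s).tendsto_nhdsGT_zero (by linarith)) ((hu.mul_rpow s).tendsto_atTop hm),
    setIntegral_congr_fun measurableSet_Ioi hsplit,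
    integral_sub (hvint.const_mul mu) (hkernel.const_mul _), integral_const_mul,
    integral_const_mul, integral_exp_neg_mul_sub_mul_rpow_sub_one (by linarith) hs1' hlam hmu,
    integral_rpow_mul_exp_neg_mul_Ioi_of_neg_one_lt (by linarith) hlam, Gamma_add_one hs1',
    Gamma_add_one hs0]
  simp only [neg_add', rpow_sub_one hlam.ne', rpow_sub_one hmu.ne']
  field_simp
  ring

/-- For `a ∈ (0,2)`, `a ≠ 1`, `λ, μ > 0`:
`∫_0^∞ ((μ-λ)·x·e^{-λx} - e^{-λx} + e^{-μx})·x^{-1-a} dx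
  = Γ(-a)·((a-1)·λ^a - a·μ·λ^{a-1} + μ^a)`. -/
theorem gts_kl_integral_eval (a lam mu : ℝ)
    (ha : a ∈ Set.Ioo (0 : ℝ) 2) (ha1 : a ≠ 1) (hlam : 0 < lam) (hmu : 0 < mu) :
    ∫ x in Set.Ioi (0 : ℝ),
        ((mu - lam) * x * Real.exp (-(lam * x)) - Real.exp (-(lam * x))
          + Real.exp (-(mu * x))) * x ^ (-1 - a)
      = Real.Gamma (-a) * ((a - 1) * lam ^ a - a * mu * lam ^ (a - 1) + mu ^ a) := by
  have hmellin := integral_expBregman_mul_rpow_sub_one (s := -a) (by linarith [ha.2])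
    (neg_ne_zero.2 (ne_of_gt ha.1)) (fun h => ha1 (by linarith)) hlam hmu
  rw [neg_neg] at hmellin
  rw [show -1 - a = -a - 1 by ring]
  refine hmellin.trans ?_
  rw [rpow_sub_one hlam.ne']
  field_simp
  ring
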